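/- Every symmetric bilinear form on the space of trace-free symmetric n×n matrices that is invariant under conjugation by O(n) is a scalar multiple of the Frobenius inner product tr(E E'). -/

import Mathlib

/-!
On diagonal matrices the form becomes a bilinear form on the sum-zero vectors of `ℝⁿ`, and
conjugation by permutation matrices makes it invariant under permuting coordinates. As `Sₙ` is
doubly transitive, it takes one value `2c` on all `eᵢ - eⱼ` (`i ≠ j`); polarizing along
`eᵢ - eₖ = (eᵢ - eⱼ) + (eⱼ - eₖ)` then shows it is `c` times the dot product. By the spectral
theorem every trace-free symmetric `E` is orthogonally conjugate to a diagonal matrix, so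
`E • E = c tr(E²)`, and polarization gives `E • E' = c tr(E E')`.
-/

open Matrix

theorem LinearMap.apply_eq_zero_of_apply_self_eq_zero {K M : Type*} [Field K] [NeZero (2 : K)]
    [AddCommGroup M] [Module K M] (B : M →ₗ[K] M →ₗ[K] K) {x y : M}
    (hB : B y x = B x y) (hx : B x x = 0) (hy : B y y = 0) (hxy : B (x + y) (x + y) = 0) :
    B x y = 0 := by
  have h2 : 2 * B x y = 0 := by
    simpa only [map_add, LinearMap.add_apply, hx, hy, hB, zero_add, add_zero, two_mul] using hxy
  exact (mul_eq_zero.mp h2).resolve_left two_ne_zero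

theorem LinearMap.apply_eq_mul_trace_mul_of_apply_self {n K : Type*} [Fintype n] [Field K]
    [NeZero (2 : K)] (f : Matrix n n K →ₗ[K] Matrix n n K →ₗ[K] K) {c : K} {X Y : Matrix n n K}
    (hXY : f Y X = f X Y) (hX : f X X = c * (X * X).trace) (hY : f Y Y = c * (Y * Y).trace)
    (hXY' : f (X + Y) (X + Y) = c * ((X + Y) * (X + Y)).trace) : f X Y = c * (X * Y).trace := by
  let T := (LinearMap.mul K (Matrix n n K)).compr₂ (traceLinearMap n K K)
  have hT : ∀ A B, (f - c • T) A B = f A B - c * (A * B).trace := fun _ _ => rfl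
  have := (f - c • T).apply_eq_zero_of_apply_self_eq_zero (x := X) (y := Y)
    (by rw [hT, hT, hXY, Matrix.trace_mul_comm Y]) (by rw [hT, hX, sub_self])
    (by rw [hT, hY, sub_self]) (by rw [hT, hXY', sub_self])
  rwa [hT, sub_eq_zero] at this

section SumZero

variable {ι : Type*} [Fintype ι] [DecidableEq ι]

theorem eq_sum_smul_single_sub_single_of_sum_eq_zero {R : Type*} [CommRing R] {v : ι → R}
    (hv : ∑ i, v i = 0) (j : ι) : v = ∑ i, v i • (Pi.single i 1 - Pi.single j 1) := by
  simp only [smul_sub, Finset.sum_sub_distrib, ← Finset.sum_smul, hv, zero_smul, sub_zero]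
  exact pi_eq_sum_univ' v

variable {K : Type*} [Field K] [NeZero (2 : K)]

theorem LinearMap.apply_eq_zero_of_apply_single_sub_single_self_eq_zero
    (B : (ι → K) →ₗ[K] (ι → K) →ₗ[K] K)
    (hB : ∀ v w : ι → K, ∑ i, v i = 0 → ∑ i, w i = 0 → B w v = B v w)
    (hB₀ : ∀ i j, B (Pi.single i 1 - Pi.single j 1) (Pi.single i 1 - Pi.single j 1) = 0)
    {v w : ι → K} (hv : ∑ i, v i = 0) (hw : ∑ i, w i = 0) : B v w = 0 := by
  cases isEmpty_or_nonempty ι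
  · simp [Subsingleton.elim v 0]
  obtain ⟨j⟩ := ‹Nonempty ι›
  have hbasis : ∀ i k, B (Pi.single i 1 - Pi.single j 1) (Pi.single k 1 - Pi.single j 1) = 0 := by
    intro i k
    have := B.apply_eq_zero_of_apply_self_eq_zero (x := Pi.single i 1 - Pi.single j 1)
      (y := Pi.single j 1 - Pi.single k 1) (hB _ _ (by simp) (by simp)) (hB₀ i j) (hB₀ j k)
      (by rw [sub_add_sub_cancel]; exact hB₀ i k)
    rwa [← neg_sub (Pi.single k 1), map_neg, neg_eq_zero] at this
  rw [eq_sum_smul_single_sub_single_of_sum_eq_zero hv j,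
    eq_sum_smul_single_sub_single_of_sum_eq_zero hw j]
  simp only [map_sum, map_smul, LinearMap.sum_apply, LinearMap.smul_apply, hbasis, smul_zero,
    Finset.sum_const_zero]

theorem LinearMap.apply_eq_mul_dotProduct_of_perm_invariant
    (B : (ι → K) →ₗ[K] (ι → K) →ₗ[K] K)
    (hB : ∀ v w : ι → K, ∑ i, v i = 0 → ∑ i, w i = 0 → B w v = B v w)
    (hperm : ∀ (σ : Equiv.Perm ι) (v w : ι → K), ∑ i, v i = 0 → ∑ i, w i = 0 →
      B (v ∘ σ) (w ∘ σ) = B v w)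
    {a b : ι} (hab : a ≠ b) {v w : ι → K} (hv : ∑ i, v i = 0) (hw : ∑ i, w i = 0) :
    B v w = B (Pi.single a 1 - Pi.single b 1) (Pi.single a 1 - Pi.single b 1) / 2 * (v ⬝ᵥ w) := by
  set c := B (Pi.single a 1 - Pi.single b 1) (Pi.single a 1 - Pi.single b 1) / 2
  suffices (B - c • dotProductBilin K K : (ι → K) →ₗ[K] (ι → K) →ₗ[K] K) v w = 0 by
    simpa [sub_eq_zero] using this
  refine LinearMap.apply_eq_zero_of_apply_single_sub_single_self_eq_zero _
    (fun v w hv hw => ?_) (fun i j => ?_) hv hw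
  · simp [hB v w hv hw, dotProduct_comm]
  rcases eq_or_ne i j with rfl | hij
  · simp
  obtain ⟨σ, hσa, hσb⟩ := MulAction.is_two_pretransitive_iff.mp
    (Equiv.Perm.isMultiplyPretransitive ι 2) hab hij
  have hσ : (Pi.single i 1 - Pi.single j 1 : ι → K) ∘ σ = Pi.single a 1 - Pi.single b 1 := by
    simp [Pi.sub_comp, Pi.single_comp_equiv, ← hσa, ← hσb]
  have hdot : (Pi.single i 1 - Pi.single j 1 : ι → K) ⬝ᵥ (Pi.single i 1 - Pi.single j 1) = 2 := by
    simp [dotProduct_sub, hij, hij.symm]; ring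
  rw [LinearMap.sub_apply, LinearMap.sub_apply, ← hperm σ _ _ (by simp) (by simp), hσ,
    LinearMap.smul_apply, LinearMap.smul_apply, dotProductBilin_apply_apply, hdot, smul_eq_mul,
    div_mul_cancel₀ _ two_ne_zero, sub_self]

end SumZero

namespace Matrix

variable {n : Type*} [Fintype n] [DecidableEq n]

theorem permMatrix_mem_orthogonalGroup {R : Type*} [CommRing R] (σ : Equiv.Perm n) :
    σ.permMatrix R ∈ orthogonalGroup n R := by
  rw [mem_orthogonalGroup_iff, transpose_permMatrix, ← permMatrix_mul, inv_mul_cancel,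
    permMatrix_one]

theorem permMatrix_mul_diagonal_mul_transpose {R : Type*} [CommRing R] (σ : Equiv.Perm n)
    (v : n → R) : σ.permMatrix R * diagonal v * (σ.permMatrix R)ᵀ = diagonal (v ∘ σ) := by
  rw [transpose_permMatrix, PEquiv.toMatrix_toPEquiv_mul, PEquiv.mul_toMatrix_toPEquiv,
    submatrix_submatrix]
  exact submatrix_diagonal_equiv v σ

theorem inv_eq_transpose_of_mem_orthogonalGroup {R : Type*} [CommRing R] {O : Matrix n n R}
    (hO : O ∈ orthogonalGroup n R) : O⁻¹ = Oᵀ :=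
  inv_eq_right_inv ((mem_orthogonalGroup_iff n R).mp hO)

theorem trace_mul_mul_transpose_of_mem_orthogonalGroup {R : Type*} [CommRing R]
    {O : Matrix n n R} (hO : O ∈ orthogonalGroup n R) (A : Matrix n n R) :
    trace (O * A * Oᵀ) = trace A := by
  rw [trace_mul_cycle, (mem_orthogonalGroup_iff' n R).mp hO, Matrix.one_mul]

theorem mul_mul_transpose_mul_of_mem_orthogonalGroup {R : Type*} [CommRing R]
    {O : Matrix n n R} (hO : O ∈ orthogonalGroup n R) (A B : Matrix n n R) :
    O * A * Oᵀ * (O * B * Oᵀ) = O * (A * B) * Oᵀ := by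
  simp only [Matrix.mul_assoc]
  rw [← Matrix.mul_assoc Oᵀ O, (mem_orthogonalGroup_iff' n R).mp hO, Matrix.one_mul]

theorem IsSymm.exists_mem_orthogonalGroup_eq_mul_diagonal_mul_transpose {E : Matrix n n ℝ}
    (hE : E.IsSymm) : ∃ O ∈ orthogonalGroup n ℝ, ∃ d : n → ℝ, E = O * diagonal d * Oᵀ := by
  have hE' : E.IsHermitian := by
    rw [IsHermitian, conjTranspose_eq_transpose_of_trivial]; exact hE
  refine ⟨_, hE'.eigenvectorUnitary.2, hE'.eigenvalues, ?_⟩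
  simpa [star_eq_conjTranspose, conjTranspose_eq_transpose_of_trivial] using hE'.spectral_theorem

end Matrix

theorem LinearMap.apply_self_eq_mul_trace_mul_self_of_diagonal {n : Type*} [Fintype n]
    [DecidableEq n] (f : Matrix n n ℝ →ₗ[ℝ] Matrix n n ℝ →ₗ[ℝ] ℝ) {c : ℝ}
    (hinv : ∀ O ∈ orthogonalGroup n ℝ, ∀ d : n → ℝ, ∑ i, d i = 0 →
      f (O * diagonal d * Oᵀ) (O * diagonal d * Oᵀ) = f (diagonal d) (diagonal d))
    (hdiag : ∀ d : n → ℝ, ∑ i, d i = 0 → f (diagonal d) (diagonal d) = c * (d ⬝ᵥ d))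
    {E : Matrix n n ℝ} (hE : E.IsSymm) (hEt : E.trace = 0) : f E E = c * (E * E).trace := by
  obtain ⟨O, hO, d, rfl⟩ := hE.exists_mem_orthogonalGroup_eq_mul_diagonal_mul_transpose
  rw [trace_mul_mul_transpose_of_mem_orthogonalGroup hO, trace_diagonal] at hEt
  rw [hinv O hO d hEt, mul_mul_transpose_mul_of_mem_orthogonalGroup hO,
    trace_mul_mul_transpose_of_mem_orthogonalGroup hO, diagonal_mul_diagonal, trace_diagonal]
  exact hdiag d hEt

/-- Every symmetric bilinear form on the space of trace-free symmetric n×n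
matrices that is invariant under conjugation by O(n) is a scalar multiple of
the Frobenius inner product tr(E E'). -/
theorem stmt_8 (n : ℕ) (hn : 2 ≤ n)
    (f : Matrix (Fin n) (Fin n) ℝ →ₗ[ℝ] Matrix (Fin n) (Fin n) ℝ →ₗ[ℝ] ℝ)
    (hsymm : ∀ E E' : Matrix (Fin n) (Fin n) ℝ,
      Eᵀ = E → E.trace = 0 → E'ᵀ = E' → E'.trace = 0 → f E E' = f E' E)
    (hinv : ∀ O : Matrix (Fin n) (Fin n) ℝ,
      O ∈ Matrix.orthogonalGroup (Fin n) ℝ →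
      ∀ E E' : Matrix (Fin n) (Fin n) ℝ,
        Eᵀ = E → E.trace = 0 → E'ᵀ = E' → E'.trace = 0 →
        f (O * E * O⁻¹) (O * E' * O⁻¹) = f E E') :
    ∃ l : ℝ, ∀ E E' : Matrix (Fin n) (Fin n) ℝ,
      Eᵀ = E → E.trace = 0 → E'ᵀ = E' → E'.trace = 0 →
      f E E' = l * (E * E').trace := by
  have hinv_diag : ∀ O ∈ orthogonalGroup (Fin n) ℝ, ∀ v w : Fin n → ℝ,
      ∑ i, v i = 0 → ∑ i, w i = 0 →
      f (O * diagonal v * Oᵀ) (O * diagonal w * Oᵀ) = f (diagonal v) (diagonal w) := by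
    intro O hO v w hv hw
    rw [← inv_eq_transpose_of_mem_orthogonalGroup hO]
    exact hinv O hO _ _ (diagonal_transpose v) (by rwa [trace_diagonal])
      (diagonal_transpose w) (by rwa [trace_diagonal])
  let B := f.compl₁₂ (diagonalLinearMap (Fin n) ℝ ℝ) (diagonalLinearMap (Fin n) ℝ ℝ)
  have hB : ∀ v w, B v w = f (diagonal v) (diagonal w) := fun _ _ => rfl
  obtain ⟨c, hdiag⟩ : ∃ c : ℝ, ∀ v w : Fin n → ℝ, ∑ i, v i = 0 → ∑ i, w i = 0 →
      f (diagonal v) (diagonal w) = c * (v ⬝ᵥ w) := by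
    refine ⟨_, fun v w hv hw => (hB v w).symm.trans
      (B.apply_eq_mul_dotProduct_of_perm_invariant (fun v w hv hw => ?_) (fun σ v w hv hw => ?_)
        (a := ⟨0, by omega⟩) (b := ⟨1, by omega⟩) (by simp [Fin.ext_iff]) hv hw)⟩
    · show f (diagonal w) (diagonal v) = f (diagonal v) (diagonal w)
      exact hsymm _ _ (diagonal_transpose w) (by rwa [trace_diagonal])
        (diagonal_transpose v) (by rwa [trace_diagonal])
    · rw [hB, hB, ← permMatrix_mul_diagonal_mul_transpose,
        ← permMatrix_mul_diagonal_mul_transpose]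
      exact hinv_diag _ (permMatrix_mem_orthogonalGroup σ) v w hv hw
  have hquad : ∀ E : Matrix (Fin n) (Fin n) ℝ, E.IsSymm → E.trace = 0 →
      f E E = c * (E * E).trace := fun E hE hEt =>
    f.apply_self_eq_mul_trace_mul_self_of_diagonal (fun O hO d hd => hinv_diag O hO d d hd hd)
      (fun d hd => hdiag d d hd hd) hE hEt
  exact ⟨c, fun E E' hE hEt hE' hE't => f.apply_eq_mul_trace_mul_of_apply_self
    (hsymm E E' hE hEt hE' hE't).symm (hquad E hE hEt) (hquad E' hE' hE't)
    (hquad (E + E') (IsSymm.add hE hE') (by rw [trace_add, hEt, hE't, add_zero]))⟩
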